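/- Computing a strategy profile of maximum coverage in the Bakers and Millers Game is NP-hard: Maximum k-Coverage reduces in polynomial time to it. Specifically, given sets S over a ground set U and integer k, build the instance with locations L = S, for each item u ∈ U a baker with feasible set {T ∈ S : u ∈ T}, and k millers; then there is a subset S' ⊆ S of size k covering n items if and only if there is a strategy profile with coverage n. -/
import Mathlib

open Finset

/-- Number of agents (bakers or millers) choosing location `ℓ`. -/
def cnt {A L : Type*} [Fintype A] [DecidableEq L] (f : A → L) (ℓ : L) : ℕ :=
  (Finset.univ.filter (fun a => f a = ℓ)).card

/-- Coverage: the number of bakers sharing a location with at least one miller. -/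
def coverage {L B M : Type*} [Fintype B] [Fintype M] [DecidableEq L]
    (s : B → L) (t : M → L) : ℕ :=
  (Finset.univ.filter (fun b : B => 0 < cnt t (s b))).card

lemma cnt_pos_iff {A L : Type*} [Fintype A] [DecidableEq L] (f : A → L) (ℓ : L) :
    0 < cnt f ℓ ↔ ∃ a, f a = ℓ := by
  simp [cnt, Finset.card_pos, Finset.filter_nonempty_iff]

/-- the Maximum `k`-Coverage reduction is correct: with locations the
sets of `S`, one baker per item `u` with feasible set `{T ∈ S : u ∈ T}`, and `k`
millers, there is a size-`k` subfamily covering at least `n` items iff there is a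
feasible strategy profile of coverage at least `n`. -/
theorem max_coverage_reduction {U : Type*} [Fintype U] [DecidableEq U]
    (S : Finset (Finset U)) (k : ℕ) (hk : k ≤ S.card)
    (hcov : ∀ u : U, ∃ T ∈ S, u ∈ T) (n : ℕ) :
    (∃ S' ⊆ S, S'.card = k ∧ n ≤ (S'.biUnion id).card) ↔
    (∃ (s : U → {T // T ∈ S}) (t : Fin k → {T // T ∈ S}),
      (∀ u : U, s u ∈ Finset.univ.filter (fun T : {T // T ∈ S} => u ∈ T.1)) ∧
      n ≤ coverage s t) := by
  classical
  constructor
  · rintro ⟨S', hS'sub, hS'card, hn⟩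
    have e : {T // T ∈ S'} ≃ Fin k :=
      Fintype.equivFinOfCardEq (by simpa using hS'card)
    choose f hf1 hf2 using hcov
    set s : U → {T // T ∈ S} := fun u =>
      if h : ∃ T ∈ S', u ∈ T then ⟨h.choose, hS'sub h.choose_spec.1⟩
      else ⟨f u, hf1 u⟩ with hs
    set t : Fin k → {T // T ∈ S} := fun i =>
      ⟨(e.symm i).1, hS'sub (e.symm i).2⟩ with ht
    have hsmem : ∀ u, u ∈ (s u).1 := by
      intro u
      rw [hs]
      by_cases h : ∃ T ∈ S', u ∈ T
      · simp only [h, dif_pos]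
        exact h.choose_spec.2
      · simp only [h, dif_neg, not_false_iff]
        exact hf2 u
    refine ⟨s, t, fun u => by simpa using hsmem u, ?_⟩
    refine hn.trans ?_
    apply Finset.card_le_card
    intro u hu
    simp only [mem_biUnion, id] at hu
    obtain ⟨T, hT, huT⟩ := hu
    have hx : ∃ T ∈ S', u ∈ T := ⟨T, hT, huT⟩
    have hsS' : (s u).1 ∈ S' := by
      rw [hs]; simp only [hx, dif_pos]; exact hx.choose_spec.1
    simp only [mem_filter, mem_univ, true_and, cnt_pos_iff]
    refine ⟨e ⟨(s u).1, hsS'⟩, ?_⟩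
    apply Subtype.ext
    simp [ht]
  · rintro ⟨s, t, hfeas, hn⟩
    set S₀ : Finset (Finset U) := Finset.univ.image (fun m => (t m).1) with hS₀
    have hS₀sub : S₀ ⊆ S := by
      intro T hT
      simp only [hS₀, mem_image, mem_univ, true_and] at hT
      obtain ⟨m, rfl⟩ := hT
      exact (t m).2
    have hS₀card : S₀.card ≤ k := Finset.card_image_le.trans (by simp)
    obtain ⟨S', h1, h2, h3⟩ := Finset.exists_subsuperset_card_eq hS₀sub hS₀card hk
    refine ⟨S', h2, h3, hn.trans ?_⟩
    apply Finset.card_le_card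
    intro u hu
    simp only [coverage, mem_filter, mem_univ, true_and, cnt_pos_iff] at hu
    obtain ⟨m, hm⟩ := hu
    simp only [mem_biUnion, id]
    refine ⟨(s u).1, h1 ?_, ?_⟩
    · simp only [hS₀, mem_image, mem_univ, true_and]
      exact ⟨m, congrArg Subtype.val hm⟩
    · simpa using hfeas u
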